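/- In an implicative aBE algebra, for all x, y, z, t: ((y → x) → z) → t = ((y → x) → z) → ((x → z) → t). -/

import Mathlib

/-! With `a := (y ⮕ x) ⮕ z`, implicativity gives `x ⮕ a = x ⮕ z`, so after exchanging the
premises the right-hand side becomes `(x ⮕ a) ⮕ (a ⮕ t)`, and in an implicative aBE algebra
`(u ⮕ a) ⮕ (a ⮕ t) = a ⮕ t` for all `u`. -/

class ImplicativeABE (X : Type*) where
  imp : X → X → X
  one : X
  one_imp : ∀ x, imp one x = x
  imp_one : ∀ x, imp x one = one
  imp_self : ∀ x, imp x x = one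
  exch : ∀ x y z, imp x (imp y z) = imp y (imp x z)
  antisymm : ∀ x y, imp x y = one → imp y x = one → x = y
  implicative : ∀ x y, imp (imp x y) x = x

infixr:60 " ⮕ " => ImplicativeABE.imp
notation "𝟙" => ImplicativeABE.one

namespace ImplicativeABE

variable {X : Type*} [ImplicativeABE X]

theorem imp_imp_left_absorb (a b c : X) : (a ⮕ b ⮕ c) ⮕ b = b := by
  rw [exch, implicative]

theorem imp_imp_right_absorb (a b c : X) : a ⮕ (b ⮕ a) ⮕ c = a ⮕ c := by
  calc a ⮕ (b ⮕ a) ⮕ c = (b ⮕ a) ⮕ a ⮕ c := exch _ _ _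
    _ = (b ⮕ (a ⮕ c) ⮕ a) ⮕ a ⮕ c := by rw [implicative]
    _ = a ⮕ c := imp_imp_left_absorb _ _ _

theorem imp_left_absorb (a b c : X) : (a ⮕ b) ⮕ c ⮕ a = c ⮕ a := by
  conv_lhs => rw [← imp_imp_right_absorb a c b]
  exact imp_imp_left_absorb _ _ _

theorem imp_trans_absorb (a b c : X) : (a ⮕ b) ⮕ b ⮕ c = b ⮕ c := by
  conv_lhs => rw [← imp_left_absorb b c a]
  exact implicative _ _

end ImplicativeABE

open ImplicativeABE in
theorem stmt3 {X : Type*} [ImplicativeABE X] (x y z t : X) :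
    ((y ⮕ x) ⮕ z) ⮕ t = ((y ⮕ x) ⮕ z) ⮕ ((x ⮕ z) ⮕ t) := by
  rw [exch ((y ⮕ x) ⮕ z), ← imp_imp_right_absorb x y z]
  exact (imp_trans_absorb x _ t).symm
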